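/- Every tournament T on a finite vertex set admits a fractional dominating function g : V → [0,1] with ∑_{v∈V} g(v) ≤ 2, i.e., γ*(T) ≤ 2. -/

import Mathlib

/-!
Read a tournament as a symmetric zero-sum game: the matrix `A` with `A v u = 1` if `u → v` and
`A v u = -1` if `v → u` is skew-symmetric, so by the minimax theorem the game has value `0` and
some probability vector `p` satisfies `A p ≥ 0`. That is, every vertex receives from its
in-neighbours at least the weight it gives to its out-neighbours; since `v` and its in- and
out-neighbours cover all vertices, `1 ≤ p v + 2 p(N⁻(v))`. Hence `g = min (2p) 1` is a fractional
dominating function of weight at most `2 ∑ p = 2`.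
-/

open Finset Matrix
open scoped Classical

section Truncation

variable {α : Type*} [AddCommMonoid α] [LinearOrder α] [IsOrderedAddMonoid α]

theorem min_add_le_min_add_min {a b c : α} (ha : 0 ≤ a) (hb : 0 ≤ b) (hc : 0 ≤ c) :
    min (a + b) c ≤ min a c + min b c := by
  rcases le_total c a with hca | hac
  · rw [min_eq_right hca]
    exact (min_le_right _ _).trans (le_add_of_nonneg_right (le_min hb hc))
  rcases le_total c b with hcb | hbc
  · rw [min_eq_right hcb]
    exact (min_le_right _ _).trans (le_add_of_nonneg_left (le_min ha hc))
  rw [min_eq_left hac, min_eq_left hbc]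
  exact min_le_left _ _

theorem Finset.min_sum_le_sum_min {ι : Type*} {s : Finset ι} {f : ι → α} {c : α}
    (hf : ∀ i ∈ s, 0 ≤ f i) (hc : 0 ≤ c) : min (∑ i ∈ s, f i) c ≤ ∑ i ∈ s, min (f i) c := by
  induction s using Finset.cons_induction with
  | empty => simp [hc]
  | cons i s hi ih =>
    rw [forall_mem_cons] at hf
    rw [sum_cons, sum_cons]
    calc min (f i + ∑ j ∈ s, f j) c ≤ min (f i) c + min (∑ j ∈ s, f j) c :=
          min_add_le_min_add_min hf.1 (sum_nonneg hf.2) hc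
      _ ≤ min (f i) c + ∑ j ∈ s, min (f j) c := by gcongr; exact ih hf.2

end Truncation

section SkewSymmetric

variable {n : Type*} [Fintype n]

theorem Matrix.dotProduct_mulVec_self_eq_zero_of_transpose_eq_neg {R : Type*} [CommRing R]
    [IsAddTorsionFree R] {A : Matrix n n R} (hA : Aᵀ = -A) (x : n → R) : x ⬝ᵥ A *ᵥ x = 0 := by
  rw [← self_eq_neg]
  calc x ⬝ᵥ A *ᵥ x = x ⬝ᵥ Aᵀ *ᵥ x := by
        rw [dotProduct_mulVec, ← mulVec_transpose, dotProduct_comm]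
    _ = -(x ⬝ᵥ A *ᵥ x) := by rw [hA, neg_mulVec, dotProduct_neg]

theorem Matrix.exists_mem_stdSimplex_mulVec_nonneg_of_transpose_eq_neg [Nonempty n]
    {A : Matrix n n ℝ} (hA : Aᵀ = -A) : ∃ p ∈ stdSimplex ℝ n, 0 ≤ A *ᵥ p := by
  have hne : (stdSimplex ℝ n).Nonempty := ⟨_, single_mem_stdSimplex ℝ (Classical.arbitrary n)⟩
  have hconv := convex_stdSimplex ℝ n
  have hcpt := isCompact_stdSimplex ℝ n
  set B : (n → ℝ) →ₗ[ℝ] (n → ℝ) →ₗ[ℝ] ℝ := toLinearMap₂' ℝ A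
  obtain ⟨a, ha, b, hb, hab⟩ := Sion.exists_isSaddlePointOn (f := fun x y => B x y) hne hconv hcpt
    (fun y _ => (B.flip y).continuous_of_finiteDimensional.continuousOn.lowerSemicontinuousOn)
    (fun y _ => ((B.flip y).convexOn hconv).quasiconvexOn) hconv hne hcpt
    (fun x _ => (B x).continuous_of_finiteDimensional.continuousOn.upperSemicontinuousOn)
    (fun x _ => ((B x).concaveOn hconv).quasiconcaveOn)
  -- The saddle point gives `0 = a ⬝ A a ≤ x ⬝ A b` for every `x` in the simplex.
  refine ⟨b, hb, fun v => ?_⟩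
  simpa [B, toLinearMap₂'_apply', dotProduct_mulVec_self_eq_zero_of_transpose_eq_neg hA]
    using hab _ (single_mem_stdSimplex ℝ v) a ha

end SkewSymmetric

section Digraph

variable {V : Type*} (E : V → V → Prop)

noncomputable def dominanceMatrix : Matrix V V ℝ :=
  of fun v u => (if E u v then 1 else 0) - (if E v u then 1 else 0)

variable {E}

theorem dominanceMatrix_transpose : (dominanceMatrix E)ᵀ = -dominanceMatrix E := by
  ext v u
  simp [dominanceMatrix]

variable [Fintype V]

theorem dominanceMatrix_mulVec_apply (p : V → ℝ) (v : V) :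
    (dominanceMatrix E *ᵥ p) v =
      ∑ u ∈ univ.filter (fun u => E u v), p u - ∑ u ∈ univ.filter (fun u => E v u), p u := by
  simp [dominanceMatrix, mulVec, dotProduct, sub_mul, sum_sub_distrib, sum_filter]

theorem sum_le_add_sum_filter_add_sum_filter (htour : ∀ u v : V, u ≠ v → E u v ∨ E v u)
    {p : V → ℝ} (hp : ∀ u, 0 ≤ p u) (v : V) :
    ∑ u, p u ≤
      p v + ∑ u ∈ univ.filter (fun u => E u v), p u + ∑ u ∈ univ.filter (fun u => E v u), p u := by
  have hcover : ∀ u, p u ≤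
      (if u = v then p u else 0) + (if E u v then p u else 0) + (if E v u then p u else 0) := by
    intro u
    have := hp u
    by_cases huv : u = v
    · split_ifs <;> simp_all
    · rcases htour u v huv with h | h <;> split_ifs <;> simp_all
  calc ∑ u, p u ≤ ∑ u, ((if u = v then p u else 0) + (if E u v then p u else 0) +
        (if E v u then p u else 0)) := sum_le_sum fun u _ => hcover u
    _ = _ := by simp only [sum_add_distrib, sum_ite_eq', mem_univ, if_true, sum_filter]

theorem exists_mem_stdSimplex_one_le_add_two_mul_sum_filter [Nonempty V]
    (htour : ∀ u v : V, u ≠ v → E u v ∨ E v u) :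
    ∃ p ∈ stdSimplex ℝ V, ∀ v, 1 ≤ p v + 2 * ∑ u ∈ univ.filter (fun u => E u v), p u := by
  obtain ⟨p, ⟨hp0, hp1⟩, hAp⟩ :=
    exists_mem_stdSimplex_mulVec_nonneg_of_transpose_eq_neg (dominanceMatrix_transpose (E := E))
  refine ⟨p, ⟨hp0, hp1⟩, fun v => ?_⟩
  have hin_out := hAp v
  rw [Pi.zero_apply, dominanceMatrix_mulVec_apply] at hin_out
  linarith [sum_le_add_sum_filter_add_sum_filter htour hp0 v]

end Digraph

theorem tournament_fractional_domination_le_two_general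
    {V : Type*} [Fintype V] (E : V → V → Prop)
    (htour : ∀ u v : V, u ≠ v → E u v ∨ E v u) :
    ∃ g : V → ℝ,
      (∀ v, 0 ≤ g v ∧ g v ≤ 1) ∧
      (∀ v, 1 ≤ g v + ∑ x ∈ univ.filter (fun x => E x v), g x) ∧
      ∑ v, g v ≤ 2 := by
  rcases isEmpty_or_nonempty V with hV | hV
  · exact ⟨0, isEmptyElim, isEmptyElim, by simp⟩
  obtain ⟨p, ⟨hp0, hp1⟩, hdom⟩ := exists_mem_stdSimplex_one_le_add_two_mul_sum_filter htour
  have h2p : ∀ u, 0 ≤ 2 * p u := fun u => mul_nonneg zero_le_two (hp0 u)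
  refine ⟨fun v => min (2 * p v) 1, fun v => ⟨le_min (h2p v) zero_le_one, min_le_right _ _⟩,
    fun v => ?_, ?_⟩
  · set S := univ.filter (fun x => E x v)
    have hv : 1 ≤ 2 * p v + ∑ u ∈ S, 2 * p u := by rw [← mul_sum]; linarith [hdom v, hp0 v]
    calc (1 : ℝ) = min (2 * p v + ∑ u ∈ S, 2 * p u) 1 := (min_eq_right hv).symm
      _ ≤ min (2 * p v) 1 + min (∑ u ∈ S, 2 * p u) 1 :=
          min_add_le_min_add_min (h2p v) (sum_nonneg fun u _ => h2p u) zero_le_one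
      _ ≤ min (2 * p v) 1 + ∑ u ∈ S, min (2 * p u) 1 := by
          gcongr; exact min_sum_le_sum_min (fun u _ => h2p u) zero_le_one
  · calc ∑ v, min (2 * p v) 1 ≤ ∑ v, 2 * p v := sum_le_sum fun v _ => min_le_left _ _
      _ = 2 := by rw [← mul_sum, hp1, mul_one]

/-- Every finite tournament has a fractional dominating function of total weight at
most `2`: i.e. `γ*(T) ≤ 2`. -/
theorem tournament_fractional_domination_le_two
    {V : Type*} [Fintype V] (E : V → V → Prop)
    (hirr : Irreflexive E) (hsimple : ∀ u v, E u v → ¬ E v u)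
    (htour : ∀ u v : V, u ≠ v → E u v ∨ E v u) :
    ∃ g : V → ℝ,
      (∀ v, 0 ≤ g v ∧ g v ≤ 1) ∧
      (∀ v, 1 ≤ g v + ∑ x ∈ univ.filter (fun x => E x v), g x) ∧
      ∑ v, g v ≤ 2 :=
  tournament_fractional_domination_le_two_general E htour
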